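/- arXiv:2602.23827 — 5 statements merged into one kernel-verified Lean document; each statement's English description precedes it below -/
import Mathlib

section
/- For every non-negative real sequence (d_r)_{r=0}^{R+1} with d_0 > 0, every natural number R, and parameters η_max > 0, c_1 ≥ 0, c_2 ≥ 0, there exists a step size η with 0 < η ≤ η_max such that Ψ_R := (1/(R+1)) · Σ_{r=1}^{R+1} ( d_{r−1}/η − d_r/η + c_1 η + c_2 η² ) satisfies Ψ_R ≤ d_0/(η_max (R+1)) + 2 √(c_1 d_0 / (R+1)) + 2 (d_0/(R+1))^{2/3} · c_2^{1/3}. -/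
open Finset

lemma sqrt_aux (S c : ℝ) (hS : 0 < S) (hc : 0 < c) :
    0 < Real.sqrt S / Real.sqrt c ∧
    S / (Real.sqrt S / Real.sqrt c) = Real.sqrt (c * S) ∧
    c * (Real.sqrt S / Real.sqrt c) = Real.sqrt (c * S) := by
  have hsS : 0 < Real.sqrt S := Real.sqrt_pos.2 hS
  have hsc : 0 < Real.sqrt c := Real.sqrt_pos.2 hc
  have hS' : Real.sqrt S * Real.sqrt S = S := Real.mul_self_sqrt hS.le
  have hc' : Real.sqrt c * Real.sqrt c = c := Real.mul_self_sqrt hc.le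
  refine ⟨div_pos hsS hsc, ?_, ?_⟩
  · rw [Real.sqrt_mul hc.le]
    field_simp
    nlinarith
  · rw [Real.sqrt_mul hc.le]
    field_simp
    nlinarith

lemma cbrt_aux (S c : ℝ) (hS : 0 < S) (hc : 0 < c) :
    0 < S ^ ((1:ℝ)/3) / c ^ ((1:ℝ)/3) ∧
    S / (S ^ ((1:ℝ)/3) / c ^ ((1:ℝ)/3)) = S ^ ((2:ℝ)/3) * c ^ ((1:ℝ)/3) ∧
    c * (S ^ ((1:ℝ)/3) / c ^ ((1:ℝ)/3)) ^ 2 = S ^ ((2:ℝ)/3) * c ^ ((1:ℝ)/3) := by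
  have h1 : 0 < S ^ ((1:ℝ)/3) := Real.rpow_pos_of_pos hS _
  have h2 : 0 < c ^ ((1:ℝ)/3) := Real.rpow_pos_of_pos hc _
  refine ⟨div_pos h1 h2, ?_, ?_⟩
  · have hSsplit : S ^ ((2:ℝ)/3) * S ^ ((1:ℝ)/3) = S := by
      rw [← Real.rpow_add hS]; norm_num
    rw [div_div_eq_mul_div, div_eq_iff h1.ne', mul_right_comm, hSsplit]
  · have hb2 : (S ^ ((1:ℝ)/3) / c ^ ((1:ℝ)/3)) ^ 2
        = S ^ ((2:ℝ)/3) / c ^ ((2:ℝ)/3) := by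
      rw [div_pow, ← Real.rpow_natCast (S ^ ((1:ℝ)/3)) 2,
        ← Real.rpow_natCast (c ^ ((1:ℝ)/3)) 2,
        ← Real.rpow_mul hS.le, ← Real.rpow_mul hc.le]
      norm_num
    have h3 : 0 < c ^ ((2:ℝ)/3) := Real.rpow_pos_of_pos hc _
    have hcc : c ^ ((1:ℝ)/3) * c ^ ((2:ℝ)/3) = c := by
      rw [← Real.rpow_add hc]; norm_num
    rw [hb2, mul_div_assoc', mul_comm c, mul_div_assoc]
    congr 1
    rw [div_eq_iff h3.ne']
    exact hcc.symm

lemma combine_aux (S ηmax c₁ c₂ : ℝ) (hS : 0 < S) (hη : 0 < ηmax)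
    (hc₁ : 0 ≤ c₁) (hc₂ : 0 ≤ c₂) :
    ∃ η : ℝ, 0 < η ∧ η ≤ ηmax ∧
      S / η + c₁ * η + c₂ * η ^ 2
        ≤ S / ηmax + 2 * Real.sqrt (c₁ * S) + 2 * S ^ ((2:ℝ)/3) * c₂ ^ ((1:ℝ)/3) := by
  rcases hc₁.eq_or_lt with rfl | hc₁
  · rcases hc₂.eq_or_lt with rfl | hc₂
    · refine ⟨ηmax, hη, le_refl _, ?_⟩
      have h1 : ((0:ℝ)) ^ ((1:ℝ)/3) = 0 := Real.zero_rpow (by norm_num)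
      simp [h1]
    · -- c₁ = 0, c₂ > 0
      obtain ⟨hb, hb1, hb2⟩ := cbrt_aux S c₂ hS hc₂
      set b := S ^ ((1:ℝ)/3) / c₂ ^ ((1:ℝ)/3) with hbdef
      refine ⟨min ηmax b, lt_min hη hb, min_le_left _ _, ?_⟩
      have hη' : 0 < min ηmax b := lt_min hη hb
      have h1 : S / min ηmax b ≤ S / ηmax + S / b := by
        rcases min_cases ηmax b with ⟨h, _⟩ | ⟨h, _⟩ <;> rw [h]
        · have : 0 ≤ S / b := (div_pos hS hb).le; linarith
        · have : 0 ≤ S / ηmax := (div_pos hS hη).le; linarith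
      have h2 : c₂ * (min ηmax b) ^ 2 ≤ c₂ * b ^ 2 := by
        apply mul_le_mul_of_nonneg_left _ hc₂.le
        exact pow_le_pow_left₀ hη'.le (min_le_right _ _) 2
      have h3 : Real.sqrt (0 * S) = 0 := by simp
      rw [h3]
      nlinarith [hb1, hb2]
  · rcases hc₂.eq_or_lt with rfl | hc₂
    · -- c₁ > 0, c₂ = 0
      obtain ⟨ha, ha1, ha2⟩ := sqrt_aux S c₁ hS hc₁
      set a := Real.sqrt S / Real.sqrt c₁ with hadef
      refine ⟨min ηmax a, lt_min hη ha, min_le_left _ _, ?_⟩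
      have h1 : S / min ηmax a ≤ S / ηmax + S / a := by
        rcases min_cases ηmax a with ⟨h, _⟩ | ⟨h, _⟩ <;> rw [h]
        · have : 0 ≤ S / a := (div_pos hS ha).le; linarith
        · have : 0 ≤ S / ηmax := (div_pos hS hη).le; linarith
      have h2 : c₁ * min ηmax a ≤ c₁ * a :=
        mul_le_mul_of_nonneg_left (min_le_right _ _) hc₁.le
      have h3 : ((0:ℝ)) ^ ((1:ℝ)/3) = 0 := Real.zero_rpow (by norm_num)
      rw [h3]
      nlinarith [ha1, ha2]
    · -- c₁ > 0, c₂ > 0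
      obtain ⟨ha, ha1, ha2⟩ := sqrt_aux S c₁ hS hc₁
      obtain ⟨hb, hb1, hb2⟩ := cbrt_aux S c₂ hS hc₂
      set a := Real.sqrt S / Real.sqrt c₁ with hadef
      set b := S ^ ((1:ℝ)/3) / c₂ ^ ((1:ℝ)/3) with hbdef
      refine ⟨min ηmax (min a b), lt_min hη (lt_min ha hb), min_le_left _ _, ?_⟩
      have hη' : 0 < min ηmax (min a b) := lt_min hη (lt_min ha hb)
      have h1 : S / min ηmax (min a b) ≤ S / ηmax + S / a + S / b := by
        have pa : 0 ≤ S / a := (div_pos hS ha).le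
        have pb : 0 ≤ S / b := (div_pos hS hb).le
        have pm : 0 ≤ S / ηmax := (div_pos hS hη).le
        rcases min_cases ηmax (min a b) with ⟨h, _⟩ | ⟨h, _⟩ <;> rw [h]
        · linarith
        · rcases min_cases a b with ⟨h', _⟩ | ⟨h', _⟩ <;> rw [h'] <;> linarith
      have h2 : c₁ * min ηmax (min a b) ≤ c₁ * a :=
        mul_le_mul_of_nonneg_left (le_trans (min_le_right _ _) (min_le_left _ _)) hc₁.le
      have h3 : c₂ * (min ηmax (min a b)) ^ 2 ≤ c₂ * b ^ 2 := by
        apply mul_le_mul_of_nonneg_left _ hc₂.le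
        exact pow_le_pow_left₀ hη'.le (le_trans (min_le_right _ _) (min_le_right _ _)) 2
      nlinarith [ha1, ha2, hb1, hb2]

/-- Sub-linear convergence rate lemma: for every non-negative sequence
`(d r)_{r=0}^{R+1}` with `d 0 > 0`, and parameters `η_max > 0`, `c₁ ≥ 0`,
`c₂ ≥ 0`, there exists a step size `0 < η ≤ η_max` such that
`Ψ_R := (1/(R+1)) ∑_{r=1}^{R+1} (d_{r-1}/η − d_r/η + c₁ η + c₂ η²)` satisfies
`Ψ_R ≤ d₀/(η_max (R+1)) + 2 √(c₁ d₀/(R+1)) + 2 (d₀/(R+1))^{2/3} c₂^{1/3}`. -/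
theorem sublinear_convergence_rate
    (d : ℕ → ℝ) (R : ℕ) (ηmax c₁ c₂ : ℝ)
    (hd : ∀ r ≤ R + 1, 0 ≤ d r) (hd0 : 0 < d 0)
    (hηmax : 0 < ηmax) (hc₁ : 0 ≤ c₁) (hc₂ : 0 ≤ c₂) :
    ∃ η : ℝ, 0 < η ∧ η ≤ ηmax ∧
      (1 / (R + 1 : ℝ)) *
          ∑ r ∈ Finset.Icc 1 (R + 1),
            (d (r - 1) / η - d r / η + c₁ * η + c₂ * η ^ 2)
        ≤ d 0 / (ηmax * (R + 1)) + 2 * Real.sqrt (c₁ * d 0 / (R + 1)) +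
            2 * (d 0 / (R + 1)) ^ ((2 : ℝ) / 3) * c₂ ^ ((1 : ℝ) / 3) := by
  have hR : (0:ℝ) < (R : ℝ) + 1 := by positivity
  set S : ℝ := d 0 / ((R : ℝ) + 1) with hSdef
  have hS : 0 < S := div_pos hd0 hR
  obtain ⟨η, hη0, hηle, hbound⟩ := combine_aux S ηmax c₁ c₂ hS hηmax hc₁ hc₂
  refine ⟨η, hη0, hηle, ?_⟩
  have hsum : ∑ r ∈ Finset.Icc 1 (R + 1),
      (d (r - 1) / η - d r / η + c₁ * η + c₂ * η ^ 2)
      = (d 0 - d (R + 1)) / η + ((R : ℝ) + 1) * (c₁ * η + c₂ * η ^ 2) := by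
    have hsplit : ∑ r ∈ Finset.Icc 1 (R + 1),
        (d (r - 1) / η - d r / η + c₁ * η + c₂ * η ^ 2)
        = (∑ r ∈ Finset.Icc 1 (R + 1), (d (r - 1) / η - d r / η))
          + (∑ r ∈ Finset.Icc 1 (R + 1), (c₁ * η + c₂ * η ^ 2)) := by
      rw [← Finset.sum_add_distrib]
      exact Finset.sum_congr rfl fun r _ => by ring
    rw [hsplit]
    have htel : ∑ r ∈ Finset.Icc 1 (R + 1), (d (r - 1) / η - d r / η)
        = d 0 / η - d (R + 1) / η := by
      rw [show Finset.Icc 1 (R + 1) = Finset.Ico 1 (R + 2) from (Finset.Ico_add_one_right_eq_Icc 1 (R+1)).symm,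
        Finset.sum_Ico_eq_sum_range]
      have := Finset.sum_range_sub' (f := fun i => d i / η) (n := R + 1)
      simpa [Nat.add_comm, Nat.add_sub_cancel] using this
    rw [htel, Finset.sum_const, Nat.card_Icc]
    push_cast
    ring
  rw [hsum]
  have key : (1 / ((R:ℝ) + 1)) *
      ((d 0 - d (R + 1)) / η + ((R : ℝ) + 1) * (c₁ * η + c₂ * η ^ 2))
      ≤ S / η + c₁ * η + c₂ * η ^ 2 := by
    have hdR : 0 ≤ d (R + 1) := hd _ le_rfl
    have e1 : (1 / ((R:ℝ) + 1)) *
        ((d 0 - d (R + 1)) / η + ((R : ℝ) + 1) * (c₁ * η + c₂ * η ^ 2))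
        = (d 0 - d (R + 1)) / (((R:ℝ) + 1) * η) + (c₁ * η + c₂ * η ^ 2) := by
      field_simp
    rw [e1, hSdef, div_div]
    have : (d 0 - d (R + 1)) / (((R:ℝ) + 1) * η) ≤ d 0 / (((R:ℝ) + 1) * η) :=
      div_le_div_of_nonneg_right (by linarith) (by positivity)
    linarith
  have e2 : S / ηmax = d 0 / (ηmax * ((R:ℝ) + 1)) := by
    rw [hSdef, div_div, mul_comm]
  have e3 : Real.sqrt (c₁ * S) = Real.sqrt (c₁ * d 0 / ((R:ℝ) + 1)) := by
    rw [hSdef, mul_div_assoc]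
  have goalR : S / ηmax + 2 * Real.sqrt (c₁ * S) + 2 * S ^ ((2:ℝ)/3) * c₂ ^ ((1:ℝ)/3)
      = d 0 / (ηmax * ((R:ℝ) + 1)) + 2 * Real.sqrt (c₁ * d 0 / ((R:ℝ) + 1)) +
        2 * (d 0 / ((R:ℝ) + 1)) ^ ((2 : ℝ) / 3) * c₂ ^ ((1 : ℝ) / 3) := by
    rw [e2, e3, hSdef]
  calc (1 / ((R:ℝ) + 1)) *
      ((d 0 - d (R + 1)) / η + ((R : ℝ) + 1) * (c₁ * η + c₂ * η ^ 2))
      ≤ S / η + c₁ * η + c₂ * η ^ 2 := key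
    _ ≤ _ := goalR ▸ hbound
end

section
/- Let E be a real inner product space, let 0 ≤ λ < 1, and let Δ^1, …, Δ^T be vectors in E. Define the momentum vectors m^t := Σ_{r=1}^{t} λ^{t−r} Δ^r for t = 1, …, T. Then Σ_{t=1}^{T} ‖m^t‖² ≤ (1/(1−λ)²) · Σ_{t=1}^{T} ‖Δ^t‖². -/
open Finset

lemma geom_aux (l : ℝ) (hl0 : 0 ≤ l) (hl1 : l < 1) (n : ℕ) :
    ∑ k ∈ Finset.range n, l ^ k ≤ 1 / (1 - l) := by
  have h1 : (0:ℝ) < 1 - l := by linarith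
  rw [geom_sum_eq (by linarith : l ≠ 1)]
  rw [show (l ^ n - 1) / (l - 1) = (1 - l ^ n) / (1 - l) by
    rw [div_eq_div_iff (by linarith) (by linarith)]; ring]
  have : 0 ≤ l ^ n := pow_nonneg hl0 n
  rw [div_le_div_iff₀ h1 h1]
  nlinarith

lemma shift_aux (l : ℝ) (hl0 : 0 ≤ l) (hl1 : l < 1) (a b : ℕ) (hab : a ≤ b) :
    ∑ t ∈ Finset.Icc a b, l ^ (t - a) ≤ 1 / (1 - l) := by
  have : ∑ t ∈ Finset.Icc a b, l ^ (t - a) = ∑ k ∈ Finset.range (b - a + 1), l ^ k := by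
    apply Finset.sum_nbij' (fun t => t - a) (fun k => k + a)
    · intro t ht
      simp only [Finset.mem_Icc] at ht
      simp only [Finset.mem_range]
      omega
    · intro k hk
      simp only [Finset.mem_range] at hk
      simp only [Finset.mem_Icc]
      omega
    · intro t ht; simp only [Finset.mem_Icc] at ht; omega
    · intro k hk; simp only [Finset.mem_range] at hk; omega
    · intro t ht; rfl
  rw [this]
  exact geom_aux l hl0 hl1 _

/-- Momentum-energy lemma: with momentum `m t = ∑_{r=1}^{t} λ^{t−r} Δ r` and
`0 ≤ λ < 1`, one has `∑_{t=1}^{T} ‖m t‖² ≤ (1/(1−λ)²) ∑_{t=1}^{T} ‖Δ t‖²`. -/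
theorem momentum_energy_bound
    {E : Type*} [NormedAddCommGroup E] [InnerProductSpace ℝ E]
    (l : ℝ) (hl0 : 0 ≤ l) (hl1 : l < 1) (T : ℕ) (Δ : ℕ → E) :
    ∑ t ∈ Finset.Icc 1 T, ‖∑ r ∈ Finset.Icc 1 t, l ^ (t - r) • Δ r‖ ^ 2 ≤
      (1 / (1 - l) ^ 2) * ∑ t ∈ Finset.Icc 1 T, ‖Δ t‖ ^ 2 := by
  have h1 : (0:ℝ) < 1 - l := by linarith
  have hinv : (0:ℝ) ≤ 1 / (1 - l) := by positivity
  -- step 1: pointwise bound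
  have step1 : ∀ t, ‖∑ r ∈ Finset.Icc 1 t, l ^ (t - r) • Δ r‖ ^ 2 ≤
      (1 / (1 - l)) * ∑ r ∈ Finset.Icc 1 t, l ^ (t - r) * ‖Δ r‖ ^ 2 := by
    intro t
    have hn : ‖∑ r ∈ Finset.Icc 1 t, l ^ (t - r) • Δ r‖ ≤
        ∑ r ∈ Finset.Icc 1 t, l ^ (t - r) * ‖Δ r‖ := by
      refine (norm_sum_le _ _).trans (le_of_eq ?_)
      refine Finset.sum_congr rfl fun r _ => ?_
      rw [norm_smul, Real.norm_eq_abs, abs_of_nonneg (pow_nonneg hl0 _)]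
    have hsq : ‖∑ r ∈ Finset.Icc 1 t, l ^ (t - r) • Δ r‖ ^ 2 ≤
        (∑ r ∈ Finset.Icc 1 t, l ^ (t - r) * ‖Δ r‖) ^ 2 := by
      apply pow_le_pow_left₀ (norm_nonneg _) hn
    refine hsq.trans ?_
    have cs := sum_sq_le_sum_mul_sum_of_sq_eq_mul (Finset.Icc 1 t)
      (r := fun r => l ^ (t - r) * ‖Δ r‖)
      (f := fun r => l ^ (t - r))
      (g := fun r => l ^ (t - r) * ‖Δ r‖ ^ 2)
      (fun r _ => pow_nonneg hl0 _)
      (fun r _ => mul_nonneg (pow_nonneg hl0 _) (sq_nonneg _))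
      (fun r _ => by ring)
    refine cs.trans ?_
    have hg0 : (0:ℝ) ≤ ∑ r ∈ Finset.Icc 1 t, l ^ (t - r) * ‖Δ r‖ ^ 2 :=
      Finset.sum_nonneg fun r _ => mul_nonneg (pow_nonneg hl0 _) (sq_nonneg _)
    apply mul_le_mul_of_nonneg_right _ hg0
    rcases Nat.lt_or_ge t 1 with ht | ht
    · interval_cases t
      simp [hinv]
      linarith
    · calc ∑ r ∈ Finset.Icc 1 t, l ^ (t - r)
          = ∑ r ∈ Finset.Icc 1 t, l ^ (r - 1) := by
            apply Finset.sum_nbij' (fun r => t + 1 - r) (fun r => t + 1 - r) <;>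
              intro r hr <;> simp only [Finset.mem_Icc] at * <;> try omega
            congr 1; omega
        _ ≤ 1 / (1 - l) := shift_aux l hl0 hl1 1 t ht
  -- sum up and swap
  calc ∑ t ∈ Finset.Icc 1 T, ‖∑ r ∈ Finset.Icc 1 t, l ^ (t - r) • Δ r‖ ^ 2
      ≤ ∑ t ∈ Finset.Icc 1 T, (1 / (1 - l)) * ∑ r ∈ Finset.Icc 1 t, l ^ (t - r) * ‖Δ r‖ ^ 2 :=
        Finset.sum_le_sum fun t _ => step1 t
    _ = (1 / (1 - l)) * ∑ r ∈ Finset.Icc 1 T, ∑ t ∈ Finset.Icc r T, l ^ (t - r) * ‖Δ r‖ ^ 2 := by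
        rw [← Finset.mul_sum]
        congr 1
        rw [Finset.sum_comm' (s' := fun r => Finset.Icc r T) (t' := Finset.Icc 1 T)]
        intro t r
        simp only [Finset.mem_Icc]
        omega
    _ ≤ (1 / (1 - l)) * ∑ r ∈ Finset.Icc 1 T, (1 / (1 - l)) * ‖Δ r‖ ^ 2 := by
        apply mul_le_mul_of_nonneg_left _ hinv
        apply Finset.sum_le_sum
        intro r hr
        simp only [Finset.mem_Icc] at hr
        rw [← Finset.sum_mul]
        exact mul_le_mul_of_nonneg_right (shift_aux l hl0 hl1 r T hr.2) (sq_nonneg _)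
    _ = (1 / (1 - l) ^ 2) * ∑ t ∈ Finset.Icc 1 T, ‖Δ t‖ ^ 2 := by
        rw [← Finset.mul_sum, ← mul_assoc]
        congr 1
        field_simp
end

section
/- Let E be a finite-dimensional real inner product space, let L ≥ 0, and let F : E → ℝ be a differentiable function whose gradient ∇F is L-Lipschitz. Let 0 ≤ λ < 1 and let z, Φ, m, δ ∈ E be vectors satisfying z − Φ = (λ²/(1−λ)) m, and set z' := z + (1/(1−λ)) δ. Then F(z') ≤ F(z) + (1/(1−λ)) ⟨∇F(Φ), δ⟩ + (L/(2(1−λ))) ‖m‖² + ( L/(2(1−λ)³) + L/(2(1−λ)²) ) ‖δ‖². -/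
/-!
With `u = (1/(1-λ)) • δ`, the descent lemma at `z` gives
`F (z + u) ≤ F z + ⟪∇F z, u⟫ + L/2 ‖u‖²`. Replacing `∇F z` by `∇F Φ` costs
`L ‖z - Φ‖ ‖u‖ = L λ² ‖m‖ ‖δ‖ / (1-λ)²`, and since `λ² ≤ 1` AM–GM splits this cross term into
`L/(2(1-λ)) ‖m‖² + L/(2(1-λ)³) ‖δ‖²`.
-/

open Set
open scoped RealInnerProductSpace

section LipschitzGradient

variable {E : Type*} [NormedAddCommGroup E] [InnerProductSpace ℝ E] [CompleteSpace E]
  {F : E → ℝ} {L : ℝ}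

lemma HasGradientAt.hasDerivAt_comp_add_smul {g x u : E} {t : ℝ}
    (h : HasGradientAt F g (x + t • u)) :
    HasDerivAt (fun s : ℝ => F (x + s • u)) ⟪g, u⟫ t := by
  have hline : HasDerivAt (fun s : ℝ => x + s • u) u t := by
    simpa using ((hasDerivAt_id t).smul_const u).const_add x
  simpa [Function.comp_def] using h.hasFDerivAt.comp_hasDerivAt t hline

theorem image_add_le_of_lipschitz_gradient (hF : Differentiable ℝ F)
    (hlip : ∀ x y, ‖gradient F x - gradient F y‖ ≤ L * ‖x - y‖) (x u : E) :
    F (x + u) ≤ F x + ⟪gradient F x, u⟫ + L / 2 * ‖u‖ ^ 2 := by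
  -- the defect of the quadratic upper model along the segment is antitone in `t`
  set φ : ℝ → ℝ := fun t => F (x + t • u) - t * ⟪gradient F x, u⟫ - L / 2 * t ^ 2 * ‖u‖ ^ 2
  have hφ' : ∀ t, HasDerivAt φ
      (⟪gradient F (x + t • u) - gradient F x, u⟫ - L * t * ‖u‖ ^ 2) t := by
    intro t
    refine ((((hF (x + t • u)).hasGradientAt.hasDerivAt_comp_add_smul (x := x)).sub
      ((hasDerivAt_id t).mul_const ⟪gradient F x, u⟫)).sub
      (((hasDerivAt_pow 2 t).const_mul (L / 2)).mul_const (‖u‖ ^ 2))).congr_deriv ?_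
    simp only [inner_sub_left]
    ring
  have hanti : AntitoneOn φ (Icc 0 1) := by
    refine antitoneOn_of_hasDerivWithinAt_nonpos (convex_Icc 0 1)
      (fun t _ => (hφ' t).continuousAt.continuousWithinAt)
      (fun t _ => (hφ' t).hasDerivWithinAt) ?_
    rintro t ht
    rw [interior_Icc] at ht
    have hgrad : ‖gradient F (x + t • u) - gradient F x‖ ≤ L * t * ‖u‖ := by
      simpa [norm_smul, abs_of_pos ht.1, mul_assoc] using hlip (x + t • u) x
    calc ⟪gradient F (x + t • u) - gradient F x, u⟫ - L * t * ‖u‖ ^ 2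
        ≤ ‖gradient F (x + t • u) - gradient F x‖ * ‖u‖ - L * t * ‖u‖ ^ 2 := by
          gcongr; exact real_inner_le_norm _ _
      _ ≤ L * t * ‖u‖ * ‖u‖ - L * t * ‖u‖ ^ 2 := by gcongr
      _ = 0 := by ring
  have hφ01 := hanti (left_mem_Icc.2 zero_le_one) (right_mem_Icc.2 zero_le_one) zero_le_one
  simp only [φ, zero_smul, add_zero, one_smul] at hφ01
  linarith

theorem image_add_le_inner_gradient_of_lipschitz_gradient (hF : Differentiable ℝ F)
    (hlip : ∀ x y, ‖gradient F x - gradient F y‖ ≤ L * ‖x - y‖) (x y u : E) :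
    F (x + u) ≤ F x + ⟪gradient F y, u⟫ + L * ‖x - y‖ * ‖u‖ + L / 2 * ‖u‖ ^ 2 := by
  have hshift : ⟪gradient F x - gradient F y, u⟫ ≤ L * ‖x - y‖ * ‖u‖ :=
    (real_inner_le_norm _ _).trans (by gcongr; exact hlip x y)
  rw [inner_sub_left] at hshift
  linarith [image_add_le_of_lipschitz_gradient hF hlip x u]

end LipschitzGradient

lemma momentum_cross_term_le {L l a b : ℝ} (hL : 0 ≤ L) (hl : l ^ 2 ≤ 1) (hl1 : l < 1)
    (ha : 0 ≤ a) (hb : 0 ≤ b) :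
    L * (l ^ 2 / (1 - l) * a) * (b / (1 - l)) + L / 2 * (b / (1 - l)) ^ 2 ≤
      L / (2 * (1 - l)) * a ^ 2 + (L / (2 * (1 - l) ^ 3) + L / (2 * (1 - l) ^ 2)) * b ^ 2 := by
  have hs : 0 < 1 - l := by linarith
  have key : 2 * l ^ 2 * a * b * (1 - l) ≤ (1 - l) ^ 2 * a ^ 2 + b ^ 2 := by
    nlinarith [sq_nonneg ((1 - l) * a - b),
      mul_nonneg (mul_nonneg (mul_nonneg ha hb) hs.le) (sub_nonneg.2 hl)]
  have hdiff : L / (2 * (1 - l)) * a ^ 2 + (L / (2 * (1 - l) ^ 3) + L / (2 * (1 - l) ^ 2)) * b ^ 2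
      - (L * (l ^ 2 / (1 - l) * a) * (b / (1 - l)) + L / 2 * (b / (1 - l)) ^ 2)
      = L * ((1 - l) ^ 2 * a ^ 2 + b ^ 2 - 2 * l ^ 2 * a * b * (1 - l)) / (2 * (1 - l) ^ 3) := by
    field_simp
    ring
  have hgap : 0 ≤
      L * ((1 - l) ^ 2 * a ^ 2 + b ^ 2 - 2 * l ^ 2 * a * b * (1 - l)) / (2 * (1 - l) ^ 3) :=
    div_nonneg (mul_nonneg hL (by linarith)) (by positivity)
  linarith

/-- Per-round descent inequality of the FedNSAM convergence proof: if `F` is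
differentiable with `L`-Lipschitz gradient, `0 ≤ λ < 1`,
`z − Φ = (λ²/(1−λ)) m` and `z' = z + (1/(1−λ)) δ`, then
`F(z') ≤ F(z) + (1/(1−λ))⟨∇F(Φ), δ⟩ + (L/(2(1−λ)))‖m‖²
        + (L/(2(1−λ)³) + L/(2(1−λ)²))‖δ‖²`. -/
theorem fednsam_descent_inequality
    {E : Type*} [NormedAddCommGroup E] [InnerProductSpace ℝ E]
    [FiniteDimensional ℝ E]
    (L : ℝ) (hL : 0 ≤ L) (F : E → ℝ)
    (hdiff : Differentiable ℝ F)
    (hlip : ∀ x y : E, ‖gradient F x - gradient F y‖ ≤ L * ‖x - y‖)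
    (l : ℝ) (hl0 : 0 ≤ l) (hl1 : l < 1)
    (z Φ m δ : E) (hzΦ : z - Φ = (l ^ 2 / (1 - l)) • m) :
    F (z + (1 / (1 - l)) • δ) ≤
      F z + (1 / (1 - l)) * ⟪gradient F Φ, δ⟫ +
        (L / (2 * (1 - l))) * ‖m‖ ^ 2 +
        (L / (2 * (1 - l) ^ 3) + L / (2 * (1 - l) ^ 2)) * ‖δ‖ ^ 2 := by
  have hs : 0 < 1 - l := by linarith
  have hzΦ_norm : ‖z - Φ‖ = l ^ 2 / (1 - l) * ‖m‖ := by
    rw [hzΦ, norm_smul, Real.norm_of_nonneg (by positivity)]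
  have hstep_norm : ‖(1 / (1 - l)) • δ‖ = ‖δ‖ / (1 - l) := by
    rw [norm_smul, Real.norm_of_nonneg (by positivity), one_div_mul_eq_div]
  have hdesc :=
    image_add_le_inner_gradient_of_lipschitz_gradient hdiff hlip z Φ ((1 / (1 - l)) • δ)
  rw [hzΦ_norm, hstep_norm, real_inner_smul_right] at hdesc
  have hl2 : l ^ 2 ≤ 1 := by nlinarith
  linarith [momentum_cross_term_le hL hl2 hl1 (norm_nonneg m) (norm_nonneg δ)]
end

section
/- Let E be a finite-dimensional real inner product space, let L ≥ 0, and let F_1, …, F_N : E → ℝ be differentiable functions each of whose gradient ∇F_i is L-Lipschitz, with average F := (1/N) Σ_{i=1}^N F_i (so ∇F(Φ) = (1/N) Σ_i ∇F_i(Φ)). Let K ≥ 1, η ≥ 0, Φ ∈ E, and x_{i,k} ∈ E for i ∈ {1,…,N}, k ∈ {1,…,K}. Then ⟨ ∇F(Φ), −(η/N) Σ_{i=1}^N Σ_{k=1}^K ∇F_i(x_{i,k}) ⟩ ≤ (η K / 2) · ( (L²/(K N)) Σ_{i=1}^N Σ_{k=1}^K ‖x_{i,k} − Φ‖² − ‖∇F(Φ)‖²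 ). -/
open Finset
open scoped RealInnerProductSpace

lemma norm_sum_sq_le {ι E : Type*} [NormedAddCommGroup E] [InnerProductSpace ℝ E]
    (t : Finset ι) (w : ι → E) :
    ‖∑ s ∈ t, w s‖ ^ 2 ≤ (t.card : ℝ) * ∑ s ∈ t, ‖w s‖ ^ 2 := by
  calc ‖∑ s ∈ t, w s‖ ^ 2 ≤ (∑ s ∈ t, ‖w s‖) ^ 2 := by
        gcongr; exact norm_sum_le _ _
    _ ≤ (t.card : ℝ) * ∑ s ∈ t, ‖w s‖ ^ 2 := sq_sum_le_card_mul_sum_sq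

/-- Inequality (C3) in the FedNSAM convergence proof: with
`∇F(Φ) = (1/N) ∑ᵢ ∇Fᵢ(Φ)` the gradient of the average objective,
`⟨∇F(Φ), −(η/N) ∑_{i,k} ∇Fᵢ(x_{i,k})⟩
  ≤ (ηK/2) ((L²/(KN)) ∑_{i,k} ‖x_{i,k} − Φ‖² − ‖∇F(Φ)‖²)`. -/
theorem fednsam_c3_inequality
    {E : Type*} [NormedAddCommGroup E] [InnerProductSpace ℝ E]
    [FiniteDimensional ℝ E]
    (N K : ℕ) (hN : 1 ≤ N) (hK : 1 ≤ K)
    (L η : ℝ) (hL : 0 ≤ L) (hη : 0 ≤ η)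
    (F : ℕ → E → ℝ)
    (hdiff : ∀ i ∈ Finset.Icc 1 N, Differentiable ℝ (F i))
    (hlip : ∀ i ∈ Finset.Icc 1 N, ∀ x y : E,
      ‖gradient (F i) x - gradient (F i) y‖ ≤ L * ‖x - y‖)
    (Φ : E) (x : ℕ → ℕ → E) :
    ⟪(N : ℝ)⁻¹ • ∑ i ∈ Finset.Icc 1 N, gradient (F i) Φ,
        -((η / (N : ℝ)) • ∑ i ∈ Finset.Icc 1 N, ∑ k ∈ Finset.Icc 1 K,
            gradient (F i) (x i k))⟫ ≤
      (η * K / 2) *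
        ((L ^ 2 / ((K : ℝ) * N)) *
            ∑ i ∈ Finset.Icc 1 N, ∑ k ∈ Finset.Icc 1 K, ‖x i k - Φ‖ ^ 2 -
          ‖(N : ℝ)⁻¹ • ∑ i ∈ Finset.Icc 1 N, gradient (F i) Φ‖ ^ 2) := by
  set g : E := (N : ℝ)⁻¹ • ∑ i ∈ Finset.Icc 1 N, gradient (F i) Φ with hg
  set S : E := ∑ i ∈ Finset.Icc 1 N, ∑ k ∈ Finset.Icc 1 K, gradient (F i) (x i k) with hS
  set Ssq : ℝ := ∑ i ∈ Finset.Icc 1 N, ∑ k ∈ Finset.Icc 1 K, ‖x i k - Φ‖ ^ 2 with hSsq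
  have hNpos : (0:ℝ) < N := by exact_mod_cast hN
  have hKpos : (0:ℝ) < K := by exact_mod_cast hK
  set m : ℝ := (K : ℝ) * N with hm
  have hmpos : 0 < m := by positivity
  -- identity m • g = ∑∑ gradient F i Φ
  have hmg : m • g = ∑ i ∈ Finset.Icc 1 N, ∑ k ∈ Finset.Icc 1 K, gradient (F i) Φ := by
    rw [hg, smul_smul, hm]
    have : (K:ℝ) * N * (N:ℝ)⁻¹ = (K:ℝ) := by field_simp
    rw [this]
    simp [Finset.sum_const, Nat.card_Icc, Finset.smul_sum, Nat.cast_smul_eq_nsmul]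
  -- difference bound via Jensen + Lipschitz
  have hdiffbd : ‖m • g - S‖ ^ 2 ≤ m * (L ^ 2 * Ssq) := by
    have h1 : m • g - S = ∑ p ∈ (Finset.Icc 1 N ×ˢ Finset.Icc 1 K),
        (gradient (F p.1) Φ - gradient (F p.1) (x p.1 p.2)) := by
      rw [hmg, hS, Finset.sum_product, ← Finset.sum_sub_distrib]
      refine Finset.sum_congr rfl fun i _ => ?_
      rw [← Finset.sum_sub_distrib]
    rw [h1]
    have hcard : ((Finset.Icc 1 N ×ˢ Finset.Icc 1 K).card : ℝ) = m := by
      simp [Finset.card_product, Nat.card_Icc, hm, mul_comm]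
    calc ‖∑ p ∈ (Finset.Icc 1 N ×ˢ Finset.Icc 1 K),
          (gradient (F p.1) Φ - gradient (F p.1) (x p.1 p.2))‖ ^ 2
        ≤ ((Finset.Icc 1 N ×ˢ Finset.Icc 1 K).card : ℝ) *
          ∑ p ∈ (Finset.Icc 1 N ×ˢ Finset.Icc 1 K),
            ‖gradient (F p.1) Φ - gradient (F p.1) (x p.1 p.2)‖ ^ 2 :=
          norm_sum_sq_le _ _
      _ ≤ m * (L ^ 2 * Ssq) := by
          rw [hcard]
          apply mul_le_mul_of_nonneg_left _ hmpos.le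
          rw [hSsq, Finset.mul_sum, Finset.sum_product]
          apply Finset.sum_le_sum
          intro i hi
          rw [Finset.mul_sum]
          apply Finset.sum_le_sum
          intro k _
          have hli := hlip i hi Φ (x i k)
          calc ‖gradient (F i) Φ - gradient (F i) (x i k)‖ ^ 2
              ≤ (L * ‖Φ - x i k‖) ^ 2 := pow_le_pow_left₀ (norm_nonneg _) hli 2
            _ = L ^ 2 * ‖x i k - Φ‖ ^ 2 := by rw [norm_sub_rev]; ring
  -- core algebra
  have hkey : 2 * (-⟪g, S⟫) ≤ L ^ 2 * Ssq - m * ‖g‖ ^ 2 := by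
    have hexp : ‖m • g - S‖ ^ 2 = m ^ 2 * ‖g‖ ^ 2 - 2 * m * ⟪g, S⟫ + ‖S‖ ^ 2 := by
      rw [norm_sub_sq_real, norm_smul, real_inner_smul_left]
      simp [Real.norm_eq_abs, abs_of_pos hmpos]
      ring
    nlinarith [sq_nonneg ‖S‖, hdiffbd, hexp, hmpos]
  have hinner : ⟪g, -((η / (N : ℝ)) • S)⟫ = (η / N) * (-⟪g, S⟫) := by
    rw [inner_neg_right, real_inner_smul_right]; ring
  rw [hinner]
  have h2 : (η / N) * (-⟪g, S⟫) ≤ (η / N) * ((L ^ 2 * Ssq - m * ‖g‖ ^ 2) / 2) :=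
    mul_le_mul_of_nonneg_left (by linarith) (by positivity)
  refine h2.trans_eq ?_
  rw [hm]
  field_simp
end

section
/- Let E be a real inner product space, let L ≥ 0 and σ_g ≥ 0, let N ≥ 2, K ≥ 1 and 1 ≤ s ≤ N be natural numbers, and let F_1, …, F_N : E → ℝ be differentiable functions each of whose gradient ∇F_i is L-Lipschitz, with average F := (1/N) Σ_{i=1}^N F_i. Suppose that at the point y ∈ E one has ‖∇F_i(y) − ∇F(y)‖² ≤ σ_g² for every i. Then for any family of points x_{i,k} ∈ E (i ∈ {1,…,N}, k ∈ {1,…,K}), averaging uniformly over all subsets S of {1,…,N} of cardinality s: (1 / C(N,s)) Σ_{S ⊆ {1,…,N}, |S| = s} ‖ (1/(K s)) Σ_{i∈S} Σ_{k=1}^K ∇F_i(x_{i,k}) ‖² ≤ (2 L²/(K N)) Σ_{i=1}^N Σ_{k=1}^K ‖x_{i,k} − y‖² + 8 ‖∇F(y)‖² + (4 (1 − s/N)/s) σ_g². -/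
/-!
Split each local gradient as `∇Fᵢ(x_{i,k}) = (∇Fᵢ(x_{i,k}) - ∇Fᵢ(y)) + ∇Fᵢ(y)`. By Jensen and the
Lipschitz bound the first part costs at most `L² ‖x_{i,k} - y‖²` per term, and a uniformly random
`s`-subset contains each client with probability `s / N`. The second part is the mean of a sample
of size `s` drawn without replacement from the vectors `∇Fᵢ(y)`, whose average is `∇F(y)`; its
second moment is `‖∇F(y)‖²` plus the finite-population variance
`(N - s) / (s N (N - 1)) · ∑ᵢ ‖∇Fᵢ(y) - ∇F(y)‖²`, obtained by counting the subsets through a given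
client. Since `N / (N - 1) ≤ 2`, this is at most `2 (1 - s / N) σ_g² / s`.
-/

open Finset

section Norm

variable {E : Type*} [SeminormedAddCommGroup E]

theorem norm_add_sq_le (u v : E) : ‖u + v‖ ^ 2 ≤ 2 * (‖u‖ ^ 2 + ‖v‖ ^ 2) :=
  (pow_le_pow_left₀ (norm_nonneg _) (norm_add_le u v) 2).trans add_sq_le

theorem norm_sum_sq_le_card_mul {ι : Type*} (P : Finset ι) (v : ι → E) :
    ‖∑ p ∈ P, v p‖ ^ 2 ≤ #P * ∑ p ∈ P, ‖v p‖ ^ 2 :=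
  (pow_le_pow_left₀ (norm_nonneg _) (norm_sum_le P v) 2).trans sq_sum_le_card_mul_sum_sq

variable [NormedSpace ℝ E] {ι κ : Type*}

theorem norm_sq_inv_card_smul_sum_le (P : Finset ι) (v : ι → E) :
    ‖(1 / (#P : ℝ)) • ∑ p ∈ P, v p‖ ^ 2 ≤ 1 / #P * ∑ p ∈ P, ‖v p‖ ^ 2 := by
  rw [norm_smul, mul_pow, Real.norm_of_nonneg (by positivity)]
  rcases P.eq_empty_or_nonempty with rfl | hP
  · simp
  calc (1 / (#P : ℝ)) ^ 2 * ‖∑ p ∈ P, v p‖ ^ 2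
      ≤ (1 / (#P : ℝ)) ^ 2 * (#P * ∑ p ∈ P, ‖v p‖ ^ 2) := by
        gcongr; exact norm_sum_sq_le_card_mul P v
    _ = 1 / #P * ∑ p ∈ P, ‖v p‖ ^ 2 := by field_simp

theorem norm_sq_smul_sum_sum_le_of_lipschitz (S : Finset ι) {J : Finset κ} (hJ : J.Nonempty)
    {g : ι → E → E} {L : ℝ} (hg : ∀ i ∈ S, ∀ a b, ‖g i a - g i b‖ ≤ L * ‖a - b‖)
    (x : ι → κ → E) (y : E) :
    ‖(1 / ((#J : ℝ) * #S)) • ∑ i ∈ S, ∑ k ∈ J, g i (x i k)‖ ^ 2 ≤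
      2 * L ^ 2 / (#J * #S) * ∑ i ∈ S, ∑ k ∈ J, ‖x i k - y‖ ^ 2 +
        2 * ‖(1 / (#S : ℝ)) • ∑ i ∈ S, g i y‖ ^ 2 := by
  have hsplit : (1 / ((#J : ℝ) * #S)) • ∑ i ∈ S, ∑ k ∈ J, g i (x i k) =
      (1 / (#(S ×ˢ J) : ℝ)) • ∑ p ∈ S ×ˢ J, (g p.1 (x p.1 p.2) - g p.1 y) +
        (1 / (#S : ℝ)) • ∑ i ∈ S, g i y := by
    have hcoef : 1 / ((#J : ℝ) * #S) * #J = 1 / #S := by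
      have hJ0 : (#J : ℝ) ≠ 0 := by simp [hJ.ne_empty]
      field_simp
    simp only [sum_product, sum_sub_distrib, sum_const, card_product, smul_sub, smul_sum,
      ← Nat.cast_smul_eq_nsmul ℝ, smul_smul, Nat.cast_mul, mul_comm (#S : ℝ), hcoef,
      sub_add_cancel]
  have hlip : ∑ p ∈ S ×ˢ J, ‖g p.1 (x p.1 p.2) - g p.1 y‖ ^ 2 ≤
      L ^ 2 * ∑ i ∈ S, ∑ k ∈ J, ‖x i k - y‖ ^ 2 := by
    rw [sum_product, mul_sum]
    refine sum_le_sum fun i hi => ?_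
    rw [mul_sum]
    refine sum_le_sum fun k _ => ?_
    rw [← mul_pow]
    exact pow_le_pow_left₀ (norm_nonneg _) (hg i hi _ _) 2
  calc _ ≤ 2 * (‖(1 / (#(S ×ˢ J) : ℝ)) • ∑ p ∈ S ×ˢ J, (g p.1 (x p.1 p.2) - g p.1 y)‖ ^ 2 +
        ‖(1 / (#S : ℝ)) • ∑ i ∈ S, g i y‖ ^ 2) := hsplit ▸ norm_add_sq_le _ _
    _ ≤ 2 * (1 / #(S ×ˢ J) * (L ^ 2 * ∑ i ∈ S, ∑ k ∈ J, ‖x i k - y‖ ^ 2) +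
        ‖(1 / (#S : ℝ)) • ∑ i ∈ S, g i y‖ ^ 2) := by
      gcongr
      exact (norm_sq_inv_card_smul_sum_le _ _).trans (by gcongr)
    _ = _ := by rw [card_product]; push_cast; ring

end Norm

theorem Nat.choose_sub_two_mul (n r : ℕ) :
    (n - 2).choose r * (n * (n - 1)) = n.choose (r + 1) * ((r + 1) * (n - 1 - r)) := by
  match n with
  | 0 | 1 => simp
  | m + 2 =>
    have h₁ := Nat.add_one_mul_choose_eq m r
    have h₂ := Nat.choose_mul_succ_eq (m + 1) (r + 1)
    simp only [Nat.add_sub_cancel, show m + 1 + 1 - (r + 1) = m + 1 - r by omega] at h₁ h₂ ⊢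
    calc m.choose r * ((m + 2) * (m + 1)) = (m + 1) * m.choose r * (m + 2) := by ring
      _ = (m + 2).choose (r + 1) * ((r + 1) * (m + 1 - r)) := by rw [h₁, mul_right_comm, h₂]; ring

section Sampling
variable {ι : Type*} [DecidableEq ι]

theorem sum_powersetCard_succ_sum_mem {M : Type*} [AddCommMonoid M] (A : Finset ι) (s : ℕ)
    (f : ι → Finset ι → M) :
    ∑ S ∈ A.powersetCard (s + 1), ∑ i ∈ S, f i S =
      ∑ i ∈ A, ∑ T ∈ (A.erase i).powersetCard s, f i (insert i T) := by
  rw [sum_comm' (t' := A) (s' := fun i => (A.powersetCard (s + 1)).filter (i ∈ ·))]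
  · exact sum_congr rfl fun i _ => (sum_nbij' (insert i) (·.erase i)
      (by grind) (by grind) (by grind) (by grind) fun _ _ => rfl).symm
  · grind

theorem sum_powersetCard_succ_sum {M : Type*} [AddCommMonoid M] (A : Finset ι) (s : ℕ)
    (f : ι → M) :
    ∑ S ∈ A.powersetCard (s + 1), ∑ i ∈ S, f i = (#A - 1).choose s • ∑ i ∈ A, f i := by
  rw [sum_powersetCard_succ_sum_mem, smul_sum]
  refine sum_congr rfl fun i hi => ?_
  rw [sum_const, card_powersetCard, card_erase_of_mem hi]

theorem sum_powersetCard_erase_sum_insert {M : Type*} [AddCommGroup M] {A : Finset ι}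
    {d : ι → M} (hd : ∑ j ∈ A, d j = 0) {i : ι} (hi : i ∈ A) (s : ℕ) :
    ∑ T ∈ (A.erase i).powersetCard s, ∑ j ∈ insert i T, d j = (#A - 2).choose s • d i := by
  have hB : ∑ j ∈ A.erase i, d j = -d i := by
    rw [eq_neg_iff_add_eq_zero, sum_erase_add _ _ hi, hd]
  have hA : #A - 2 = #(A.erase i) - 1 := by rw [card_erase_of_mem hi]; omega
  rw [sum_congr rfl fun T hT => sum_insert fun hiT => by grind, sum_add_distrib, sum_const,
    card_powersetCard, hA]
  cases s with
  | zero => simp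
  | succ r =>
    rw [sum_powersetCard_succ_sum, hB, smul_neg, ← sub_eq_add_neg]
    cases hm : #(A.erase i) with
    | zero =>
      rw [card_eq_zero.mp hm, sum_empty, zero_eq_neg] at hB
      simp [hB]
    | succ m => rw [Nat.add_sub_cancel, Nat.choose_succ_succ, add_nsmul, add_sub_cancel_left]

variable {E : Type*} [NormedAddCommGroup E] [InnerProductSpace ℝ E]

theorem sum_powersetCard_succ_norm_sum_sq {A : Finset ι} {d : ι → E}
    (hd : ∑ i ∈ A, d i = 0) (s : ℕ) :
    ∑ S ∈ A.powersetCard (s + 1), ‖∑ i ∈ S, d i‖ ^ 2 =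
      (#A - 2).choose s * ∑ i ∈ A, ‖d i‖ ^ 2 := by
  calc ∑ S ∈ A.powersetCard (s + 1), ‖∑ i ∈ S, d i‖ ^ 2
      = ∑ S ∈ A.powersetCard (s + 1), ∑ i ∈ S, inner ℝ (d i) (∑ j ∈ S, d j) := by
        simp only [← real_inner_self_eq_norm_sq, sum_inner]
    _ = ∑ i ∈ A, inner ℝ (d i) (∑ T ∈ (A.erase i).powersetCard s, ∑ j ∈ insert i T, d j) := by
        simp only [sum_powersetCard_succ_sum_mem, inner_sum]
    _ = ∑ i ∈ A, (#A - 2).choose s * ‖d i‖ ^ 2 := by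
        refine sum_congr rfl fun i hi => ?_
        rw [sum_powersetCard_erase_sum_insert hd hi, ← Nat.cast_smul_eq_nsmul ℝ,
          real_inner_smul_right, real_inner_self_eq_norm_sq]
    _ = (#A - 2).choose s * ∑ i ∈ A, ‖d i‖ ^ 2 := (mul_sum ..).symm

theorem average_powersetCard_sum (A : Finset ι) {s : ℕ} (hs : 0 < s) (hsA : s ≤ #A)
    (f : ι → ℝ) :
    1 / ((#A).choose s : ℝ) * ∑ S ∈ A.powersetCard s, ∑ i ∈ S, f i = s / #A * ∑ i ∈ A, f i := by
  obtain ⟨r, rfl⟩ : ∃ r, s = r + 1 := ⟨s - 1, by omega⟩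
  have hchoose : ((#A - 1).choose r : ℝ) * #A = (#A).choose (r + 1) * (r + 1 : ℕ) := by
    have h := Nat.add_one_mul_choose_eq (#A - 1) r
    rw [Nat.sub_add_cancel (by omega)] at h
    rw [mul_comm]; exact_mod_cast h
  have hC : ((#A).choose (r + 1) : ℝ) ≠ 0 := Nat.cast_ne_zero.mpr (Nat.choose_pos hsA).ne'
  have hA : (#A : ℝ) ≠ 0 := by norm_cast; omega
  rw [sum_powersetCard_succ_sum, nsmul_eq_mul]
  field_simp
  linear_combination (∑ i ∈ A, f i) * hchoose

theorem average_powersetCard_norm_sq_smul_sum (A : Finset ι) (hA : 2 ≤ #A) {s : ℕ} (hs : 0 < s)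
    (hsA : s ≤ #A) (a : ι → E) :
    1 / ((#A).choose s : ℝ) * ∑ S ∈ A.powersetCard s, ‖(1 / (s : ℝ)) • ∑ i ∈ S, a i‖ ^ 2 =
      ‖(#A : ℝ)⁻¹ • ∑ i ∈ A, a i‖ ^ 2 +
        ((#A : ℝ) - s) / (s * #A * (#A - 1)) *
          ∑ i ∈ A, ‖a i - (#A : ℝ)⁻¹ • ∑ j ∈ A, a j‖ ^ 2 := by
  obtain ⟨r, rfl⟩ : ∃ r, s = r + 1 := ⟨s - 1, by omega⟩
  set m := (#A : ℝ)⁻¹ • ∑ i ∈ A, a i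
  have hA0 : (#A : ℝ) ≠ 0 := by norm_cast; omega
  have hd : ∑ i ∈ A, (a i - m) = 0 := by
    rw [sum_sub_distrib, sum_const, ← Nat.cast_smul_eq_nsmul ℝ, smul_inv_smul₀ hA0, sub_self]
  have hexpand : ∀ S ∈ A.powersetCard (r + 1), ‖(1 / ((r + 1 : ℕ) : ℝ)) • ∑ i ∈ S, a i‖ ^ 2 =
      ‖m‖ ^ 2 + 2 / (r + 1 : ℕ) * inner ℝ m (∑ i ∈ S, (a i - m)) +
        1 / ((r + 1 : ℕ) : ℝ) ^ 2 * ‖∑ i ∈ S, (a i - m)‖ ^ 2 := by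
    intro S hS
    have hsplit : (1 / ((r + 1 : ℕ) : ℝ)) • ∑ i ∈ S, a i =
        m + (1 / ((r + 1 : ℕ) : ℝ)) • ∑ i ∈ S, (a i - m) := by
      rw [sum_sub_distrib, sum_const, (mem_powersetCard.mp hS).2, smul_sub,
        ← Nat.cast_smul_eq_nsmul ℝ, smul_smul, one_div_mul_cancel (by positivity), one_smul,
        add_sub_cancel]
    rw [hsplit, norm_add_sq_real, real_inner_smul_right, norm_smul _ (∑ i ∈ S, (a i - m)),
      mul_pow, Real.norm_of_nonneg (by positivity)]
    ring
  have hchoose : ((#A - 2).choose r : ℝ) * (#A * (#A - 1)) =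
      (#A).choose (r + 1) * ((r + 1 : ℕ) * (#A - (r + 1 : ℕ))) := by
    have h := congrArg (Nat.cast (R := ℝ)) (Nat.choose_sub_two_mul #A r)
    push_cast [Nat.cast_sub (show 1 ≤ #A by omega), Nat.cast_sub (show r ≤ #A - 1 by omega)] at h
    push_cast
    linear_combination h
  have hC : ((#A).choose (r + 1) : ℝ) ≠ 0 := Nat.cast_ne_zero.mpr (Nat.choose_pos hsA).ne'
  have hA1 : (#A : ℝ) - 1 ≠ 0 := by
    rw [sub_ne_zero]; norm_cast; omega
  rw [sum_congr rfl hexpand, sum_add_distrib, sum_add_distrib, sum_const, card_powersetCard,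
    ← mul_sum, ← mul_sum, ← inner_sum, sum_powersetCard_succ_sum, hd, smul_zero, inner_zero_right,
    sum_powersetCard_succ_norm_sum_sq hd, nsmul_eq_mul, mul_zero, add_zero]
  field_simp
  linear_combination (∑ i ∈ A, ‖a i - m‖ ^ 2) * hchoose

theorem average_powersetCard_norm_sq_smul_sum_le (A : Finset ι) (hA : 2 ≤ #A) {s : ℕ}
    (hs : 0 < s) (hsA : s ≤ #A) (a : ι → E) {σ : ℝ}
    (ha : ∀ i ∈ A, ‖a i - (#A : ℝ)⁻¹ • ∑ j ∈ A, a j‖ ^ 2 ≤ σ ^ 2) :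
    1 / ((#A).choose s : ℝ) * ∑ S ∈ A.powersetCard s, ‖(1 / (s : ℝ)) • ∑ i ∈ S, a i‖ ^ 2 ≤
      ‖(#A : ℝ)⁻¹ • ∑ i ∈ A, a i‖ ^ 2 + 2 * (1 - s / #A) / s * σ ^ 2 := by
  have hs' : (0 : ℝ) < s := by norm_cast
  have hA' : (2 : ℝ) ≤ #A := by norm_cast
  have hsA' : (s : ℝ) ≤ #A := by norm_cast
  rw [average_powersetCard_norm_sq_smul_sum A hA hs hsA, add_le_add_iff_left]
  calc _ ≤ ((#A : ℝ) - s) / (s * #A * (#A - 1)) * (#A * σ ^ 2) := by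
        gcongr
        · exact div_nonneg (by linarith) (mul_nonneg (by positivity) (by linarith))
        · exact (sum_le_sum ha).trans (by simp)
    _ = #A / (#A - 1) * (((#A : ℝ) - s) / (s * #A) * σ ^ 2) := by
        have : (#A : ℝ) - 1 ≠ 0 := by linarith
        field_simp
    _ ≤ 2 * (((#A : ℝ) - s) / (s * #A) * σ ^ 2) := by
        refine mul_le_mul_of_nonneg_right ?_ (by positivity)
        rw [div_le_iff₀ (by linarith)]; linarith
    _ = 2 * (1 - s / #A) / s * σ ^ 2 := by field_simp

end Sampling

theorem gradient_const_mul_sum {ι E : Type*} [NormedAddCommGroup E] [InnerProductSpace ℝ E]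
    [CompleteSpace E] (c : ℝ) (A : Finset ι) {f : ι → E → ℝ} {x : E}
    (hf : ∀ j ∈ A, DifferentiableAt ℝ (f j) x) :
    gradient (fun z => c * ∑ j ∈ A, f j z) x = c • ∑ j ∈ A, gradient (f j) x := by
  simp only [gradient, fderiv_const_mul (DifferentiableAt.fun_sum hf), fderiv_fun_sum hf,
    map_smul, map_sum]

theorem partial_participation_update_bound_general
    {E : Type*} [NormedAddCommGroup E] [InnerProductSpace ℝ E] [CompleteSpace E]
    (N K s : ℕ) (hN : 2 ≤ N) (hK : 1 ≤ K) (hs1 : 1 ≤ s) (hsN : s ≤ N)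
    (L σg : ℝ)
    (F : ℕ → E → ℝ)
    (hdiff : ∀ i ∈ Finset.Icc 1 N, Differentiable ℝ (F i))
    (hlip : ∀ i ∈ Finset.Icc 1 N, ∀ x y : E,
      ‖gradient (F i) x - gradient (F i) y‖ ≤ L * ‖x - y‖)
    (y : E)
    (hhet : ∀ i ∈ Finset.Icc 1 N,
      ‖gradient (F i) y -
        gradient (fun z => (N : ℝ)⁻¹ * ∑ j ∈ Finset.Icc 1 N, F j z) y‖ ^ 2 ≤ σg ^ 2)
    (x : ℕ → ℕ → E) :
    (1 / (N.choose s : ℝ)) *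
        ∑ S ∈ (Finset.Icc 1 N).powersetCard s,
          ‖(1 / ((K : ℝ) * s)) • ∑ i ∈ S, ∑ k ∈ Finset.Icc 1 K,
              gradient (F i) (x i k)‖ ^ 2 ≤
      (2 * L ^ 2 / ((K : ℝ) * N)) *
          ∑ i ∈ Finset.Icc 1 N, ∑ k ∈ Finset.Icc 1 K, ‖x i k - y‖ ^ 2 +
        8 * ‖gradient (fun z => (N : ℝ)⁻¹ * ∑ j ∈ Finset.Icc 1 N, F j z) y‖ ^ 2 +
        (4 * (1 - (s : ℝ) / N) / s) * σg ^ 2 := by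
  set A := Icc 1 N
  have hA : #A = N := by simp [A]
  rw [gradient_const_mul_sum _ A fun i hi => (hdiff i hi).differentiableAt] at hhet ⊢
  have hmean := average_powersetCard_sum A hs1 (hA ▸ hsN)
    fun i => ∑ k ∈ Icc 1 K, ‖x i k - y‖ ^ 2
  have hsample := average_powersetCard_norm_sq_smul_sum_le A (hA ▸ hN) hs1 (hA ▸ hsN)
    (fun i => gradient (F i) y) (hA ▸ hhet)
  rw [hA] at hmean hsample
  have hdrift : ∀ T : ℝ, 2 * L ^ 2 / (K * s) * (s / N * T) = 2 * L ^ 2 / (K * N) * T := by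
    intro T
    have : (s : ℝ) ≠ 0 := by norm_cast; omega
    field_simp
  calc _ ≤ 1 / (N.choose s : ℝ) * ∑ S ∈ A.powersetCard s,
          (2 * L ^ 2 / (K * s) * ∑ i ∈ S, ∑ k ∈ Icc 1 K, ‖x i k - y‖ ^ 2 +
            2 * ‖(1 / (s : ℝ)) • ∑ i ∈ S, gradient (F i) y‖ ^ 2) := by
        gcongr with S hS
        obtain ⟨hSA, hScard⟩ := mem_powersetCard.mp hS
        have h := norm_sq_smul_sum_sum_le_of_lipschitz S (nonempty_Icc.mpr hK)
          (fun i hi => hlip i (hSA hi)) x y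
        rwa [Nat.card_Icc, Nat.add_sub_cancel, hScard] at h
    _ = 2 * L ^ 2 / (K * N) * ∑ i ∈ A, ∑ k ∈ Icc 1 K, ‖x i k - y‖ ^ 2 + 2 * (1 / (N.choose s : ℝ) *
          ∑ S ∈ A.powersetCard s, ‖(1 / (s : ℝ)) • ∑ i ∈ S, gradient (F i) y‖ ^ 2) := by
        rw [← hdrift, ← hmean, sum_add_distrib, ← mul_sum, ← mul_sum]; ring
    _ ≤ _ := by
        have : 4 * (1 - (s : ℝ) / N) / s * σg ^ 2 = 2 * (2 * (1 - s / N) / s * σg ^ 2) := by ring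
        linarith [sq_nonneg ‖(N : ℝ)⁻¹ • ∑ i ∈ A, gradient (F i) y‖]

/-- Partial-client-participation, exact-gradient form of Lemma D.5: with
`F := (1/N) ∑ᵢ Fᵢ`, `L`-Lipschitz gradients, bounded heterogeneity
`‖∇Fᵢ(y) − ∇F(y)‖² ≤ σ_g²` at `y`, and uniform sampling of `s`-element
client subsets without replacement,
`(1/C(N,s)) ∑_S ‖(1/(Ks)) ∑_{i∈S,k} ∇Fᵢ(x_{i,k})‖²
  ≤ (2L²/(KN)) ∑_{i,k} ‖x_{i,k} − y‖² + 8‖∇F(y)‖² + (4(1 − s/N)/s) σ_g²`. -/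
theorem partial_participation_update_bound
    {E : Type*} [NormedAddCommGroup E] [InnerProductSpace ℝ E] [CompleteSpace E]
    (N K s : ℕ) (hN : 2 ≤ N) (hK : 1 ≤ K) (hs1 : 1 ≤ s) (hsN : s ≤ N)
    (L σg : ℝ) (hL : 0 ≤ L) (hσg : 0 ≤ σg)
    (F : ℕ → E → ℝ)
    (hdiff : ∀ i ∈ Finset.Icc 1 N, Differentiable ℝ (F i))
    (hlip : ∀ i ∈ Finset.Icc 1 N, ∀ x y : E,
      ‖gradient (F i) x - gradient (F i) y‖ ≤ L * ‖x - y‖)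
    (y : E)
    (hhet : ∀ i ∈ Finset.Icc 1 N,
      ‖gradient (F i) y -
        gradient (fun z => (N : ℝ)⁻¹ * ∑ j ∈ Finset.Icc 1 N, F j z) y‖ ^ 2 ≤ σg ^ 2)
    (x : ℕ → ℕ → E) :
    (1 / (N.choose s : ℝ)) *
        ∑ S ∈ (Finset.Icc 1 N).powersetCard s,
          ‖(1 / ((K : ℝ) * s)) • ∑ i ∈ S, ∑ k ∈ Finset.Icc 1 K,
              gradient (F i) (x i k)‖ ^ 2 ≤
      (2 * L ^ 2 / ((K : ℝ) * N)) *
          ∑ i ∈ Finset.Icc 1 N, ∑ k ∈ Finset.Icc 1 K, ‖x i k - y‖ ^ 2 +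
        8 * ‖gradient (fun z => (N : ℝ)⁻¹ * ∑ j ∈ Finset.Icc 1 N, F j z) y‖ ^ 2 +
        (4 * (1 - (s : ℝ) / N) / s) * σg ^ 2 :=
  partial_participation_update_bound_general N K s hN hK hs1 hsN L σg F hdiff hlip y hhet x
end
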